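/- arXiv:2106.04858 — 4 statements merged into one kernel-verified Lean document; each statement's English description precedes it below -/
import Mathlib

section
/- Given the NSFD scheme S_{n+1} = S_n − hβS_{n+1}φ_n and φ_{n+1} = (N−S_0)A(t_{n+1}) + hβ Σ_{j=0}^{n} A(t_{n+1−j}) S_{j+1} φ_j with A ≥ 0, S_0 ≥ 0, φ_0 ≥ 0, h ≥ 0, β ≥ 0, N ≥ S_0, all φ_n are non-negative. -/
/-!
Joint strong induction on `n`. The implicit step
`S (n+1) = S n - hβ S (n+1) φ n` reads `S (n+1) (1 + hβ φ n) = S n`, so `S (n+1)` is `S n` divided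
by a positive number; the memory sum for `φ (n+1)` involves only `φ j` with `j ≤ n` and `S (j+1)`
with `j + 1 ≤ n + 1`, all of which are already known to be non-negative.
-/

theorem nonneg_of_eq_sub_mul_mul {𝕜 : Type*} [Field 𝕜] [LinearOrder 𝕜] [IsStrictOrderedRing 𝕜]
    {a b c d : 𝕜} (ha : 0 ≤ a) (hc : 0 ≤ c) (hd : 0 ≤ d) (hb : b = a - c * b * d) : 0 ≤ b := by
  have hfactor : b * (1 + c * d) = a := by linear_combination hb
  exact nonneg_of_mul_nonneg_left (hfactor ▸ ha) (by positivity)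

/-- For the NSFD scheme, all iterates `S n` and `φ n` are nonnegative. -/
theorem stmt_2 (h β N : ℝ) (hh : 0 ≤ h) (hβ : 0 ≤ β)
    (A : ℝ → ℝ) (hA : ∀ t, 0 ≤ t → 0 ≤ A t)
    (S φ : ℕ → ℝ) (hS0 : 0 ≤ S 0) (hN : S 0 ≤ N)
    (hφ0 : φ 0 = (N - S 0) * A 0)
    (hSrec : ∀ n, S (n + 1) = S n - h * β * S (n + 1) * φ n)
    (hφrec : ∀ n, φ (n + 1) = (N - S 0) * A ((n + 1) * h)
      + h * β * ∑ j ∈ Finset.range (n + 1), A ((n + 1 - j : ℕ) * h) * S (j + 1) * φ j) :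
    (∀ n, 0 ≤ S n) ∧ (∀ n, 0 ≤ φ n) := by
  have hN0 : 0 ≤ N - S 0 := sub_nonneg.mpr hN
  have hAgrid (t : ℝ) (ht : 0 ≤ t) : 0 ≤ A (t * h) := hA _ (mul_nonneg ht hh)
  have hboth (n : ℕ) : 0 ≤ S n ∧ 0 ≤ φ n := by
    induction n using Nat.strong_induction_on with
    | _ n ih =>
      cases n with
      | zero => exact ⟨hS0, hφ0 ▸ mul_nonneg hN0 (hA 0 le_rfl)⟩
      | succ m =>
        obtain ⟨hSm, hφm⟩ := ih m m.lt_succ_self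
        have hSsucc : 0 ≤ S (m + 1) :=
          nonneg_of_eq_sub_mul_mul hSm (mul_nonneg hh hβ) hφm (hSrec m)
        have hSshift (j : ℕ) (hj : j ≤ m) : 0 ≤ S (j + 1) := by
          rcases hj.eq_or_lt with rfl | hlt
          · exact hSsucc
          · exact (ih (j + 1) (Nat.succ_lt_succ hlt)).1
        refine ⟨hSsucc, ?_⟩
        rw [hφrec m]
        have hsum : 0 ≤ ∑ j ∈ Finset.range (m + 1), A ((m + 1 - j : ℕ) * h) * S (j + 1) * φ j :=
          Finset.sum_nonneg fun j hj ↦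
            have hjm : j ≤ m := Nat.lt_succ_iff.mp (Finset.mem_range.mp hj)
            mul_nonneg (mul_nonneg (hAgrid _ (Nat.cast_nonneg _)) (hSshift j hjm))
              (ih j (Nat.lt_succ_of_le hjm)).2
        have hfirst : 0 ≤ (N - S 0) * A ((m + 1) * h) := mul_nonneg hN0 (hAgrid _ (by positivity))
        exact add_nonneg hfirst (mul_nonneg (mul_nonneg hh hβ) hsum)
  exact ⟨fun n ↦ (hboth n).1, fun n ↦ (hboth n).2⟩
end

section
/- Let (φ_n) be non-negative with φ_n ≤ φ̄ for all n (φ̄ independent of h), and suppose hβ Σ_{n=0}^∞ φ_n ≤ C for all h ∈ (0, h̄] with C independent of h. Then Σ_{n=0}^∞ (log(1 + hβφ_n) − hβφ_n) → 0 as h → 0⁺. -/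
open Filter Topology

/-!
For `x ≥ 0` we have `2x / (x + 2) ≤ log (1 + x) ≤ x`, hence `|log (1 + x) - x| ≤ x ^ 2 / 2`.
With `x = hβφₙ ≤ hβφ̄` each term is at most `(hβφ̄ / 2) · hβφₙ`, so the whole series is bounded
by `hβφ̄ C / 2 = O(h)`.
-/

namespace Real

lemma abs_log_one_add_sub_self_le {x : ℝ} (hx : 0 ≤ x) : |log (1 + x) - x| ≤ x ^ 2 / 2 := by
  have hupper : log (1 + x) ≤ x := by
    linarith [log_le_sub_one_of_pos (by linarith : (0 : ℝ) < 1 + x)]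
  have hlower : 2 * x / (x + 2) ≤ log (1 + x) := le_log_one_add_of_nonneg hx
  have hgap : x - 2 * x / (x + 2) ≤ x ^ 2 / 2 := by
    rw [sub_le_iff_le_add, ← sub_le_iff_le_add', le_div_iff₀ (by linarith)]
    nlinarith [sq_nonneg x]
  rw [abs_sub_comm, abs_of_nonneg (by linarith)]
  linarith

lemma abs_tsum_log_one_add_sub_self_le {ι : Type*} {a : ι → ℝ} {M : ℝ}
    (ha : ∀ i, 0 ≤ a i) (haM : ∀ i, a i ≤ M) (hsum : Summable a) :
    |∑' i, (log (1 + a i) - a i)| ≤ M / 2 * ∑' i, a i := by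
  have hterm : ∀ i, ‖log (1 + a i) - a i‖ ≤ M / 2 * a i := fun i =>
    calc ‖log (1 + a i) - a i‖ ≤ a i ^ 2 / 2 := abs_log_one_add_sub_self_le (ha i)
      _ = a i / 2 * a i := by ring
      _ ≤ M / 2 * a i := by gcongr; exacts [ha i, haM i]
  rw [← tsum_mul_left]
  exact tsum_of_norm_bounded (hsum.mul_left _).hasSum hterm

end Real

theorem stmt_12_general (β φbar C hbar : ℝ) (hβ : 0 < β)
    (φ : ℝ → ℕ → ℝ)
    (hφnonneg : ∀ h ∈ Set.Ioc 0 hbar, ∀ n, 0 ≤ φ h n)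
    (hφbd : ∀ h ∈ Set.Ioc 0 hbar, ∀ n, φ h n ≤ φbar)
    (hφsum : ∀ h ∈ Set.Ioc 0 hbar, Summable (φ h))
    (hsumbd : ∀ h ∈ Set.Ioc 0 hbar, h * β * ∑' n : ℕ, φ h n ≤ C) :
    Tendsto (fun h : ℝ => ∑' n : ℕ, (Real.log (1 + h * β * φ h n) - h * β * φ h n))
      (𝓝[Set.Ioc 0 hbar] 0) (𝓝 0) := by
  refine squeeze_zero_norm' (a := fun h => h * β * φbar / 2 * C) ?_ ?_
  · filter_upwards [self_mem_nhdsWithin] with h hh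
    have hhβ : 0 ≤ h * β := by positivity [hh.1]
    have hφbar : 0 ≤ φbar := (hφnonneg h hh 0).trans (hφbd h hh 0)
    calc ‖∑' n, (Real.log (1 + h * β * φ h n) - h * β * φ h n)‖
        ≤ h * β * φbar / 2 * ∑' n, h * β * φ h n :=
          Real.abs_tsum_log_one_add_sub_self_le
            (fun n => mul_nonneg hhβ (hφnonneg h hh n))
            (fun n => mul_le_mul_of_nonneg_left (hφbd h hh n) hhβ)
            ((hφsum h hh).mul_left _)
      _ ≤ h * β * φbar / 2 * C := by
          rw [tsum_mul_left]
          gcongr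
          exact hsumbd h hh
  · have hcont : Continuous fun h : ℝ => h * β * φbar / 2 * C := by fun_prop
    simpa using (hcont.tendsto 0).mono_left nhdsWithin_le_nhds

/-- If `0 ≤ φ_n(h) ≤ φbar` uniformly and `hβ ∑ φ_n(h) ≤ C` uniformly for
`h ∈ (0, hbar]`, then `∑ (log(1 + hβφ_n(h)) - hβφ_n(h)) → 0` as `h → 0⁺`. -/
theorem stmt_12 (β φbar C hbar : ℝ) (hβ : 0 < β) (hφbar : 0 < φbar)
    (hC : 0 < C) (hhbar : 0 < hbar)
    (φ : ℝ → ℕ → ℝ)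
    (hφnonneg : ∀ h ∈ Set.Ioc 0 hbar, ∀ n, 0 ≤ φ h n)
    (hφbd : ∀ h ∈ Set.Ioc 0 hbar, ∀ n, φ h n ≤ φbar)
    (hφsum : ∀ h ∈ Set.Ioc 0 hbar, Summable (φ h))
    (hsumbd : ∀ h ∈ Set.Ioc 0 hbar, h * β * ∑' n : ℕ, φ h n ≤ C) :
    Tendsto (fun h : ℝ => ∑' n : ℕ, (Real.log (1 + h * β * φ h n) - h * β * φ h n))
      (𝓝[Set.Ioc 0 hbar] 0) (𝓝 0) :=
  stmt_12_general β φbar C hbar hβ φ hφnonneg hφbd hφsum hsumbd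
end

section
/- Under the NSFD scheme the discrete final size relation holds: hβ Σ_{n=0}^∞ φ_{n+1} = R_0(h)·(1 − S_∞(h)/N), where R_0(h) = hβN Σ_{n=0}^∞ A(t_{n+1}) and S_∞(h) = lim_n S_n. -/
open Filter Topology Finset

/-!
Each step of the scheme removes `S n - S (n + 1) = hβ S (n + 1) φ n` susceptibles, so these
removals sum to `S 0 - S∞`. The recursion for `φ (n + 1)` is the source term `(N - S 0) A(t_{n+1})`
plus the Cauchy product of the removals with `A(t_{n+1})`; summing over `n` gives
`∑ φ (n + 1) = ((N - S 0) + (S 0 - S∞)) ∑ A(t_{n+1}) = (N - S∞) ∑ A(t_{n+1})`.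
-/

theorem hasSum_sub_succ_of_antitone {S : ℕ → ℝ} {l : ℝ} (hS : Antitone S)
    (hlim : Tendsto S atTop (𝓝 l)) : HasSum (fun n => S n - S (n + 1)) (S 0 - l) := by
  have hnonneg : ∀ n, 0 ≤ S n - S (n + 1) := fun n => sub_nonneg.mpr (hS n.le_succ)
  rw [hasSum_iff_tendsto_nat_of_nonneg hnonneg]
  simp_rw [sum_range_sub']
  exact tendsto_const_nhds.sub hlim

theorem HasSum.sum_range_mul {f g : ℕ → ℝ} {a b : ℝ} (hf : HasSum f a) (hg : HasSum g b) :
    HasSum (fun n => ∑ k ∈ range (n + 1), f k * g (n - k)) (a * b) := by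
  rw [← hf.tsum_eq, ← hg.tsum_eq]
  exact hasSum_sum_range_mul_of_summable_norm (summable_norm_iff.mpr hf.summable)
    (summable_norm_iff.mpr hg.summable)

theorem stmt_17_general (h β N Sinf : ℝ) (hN : 0 < N)
    (A : ℝ → ℝ)
    (hAsum : Summable (fun n : ℕ => A ((n + 1) * h)))
    (S φ : ℕ → ℝ)
    (hSmono : ∀ n, S (n + 1) ≤ S n)
    (hSlim : Tendsto S atTop (𝓝 Sinf))
    (hSrec : ∀ n, S (n + 1) = S n - h * β * S (n + 1) * φ n)
    (hφrec : ∀ n, φ (n + 1) = (N - S 0) * A ((n + 1) * h)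
      + h * β * ∑ j ∈ Finset.range (n + 1), A ((n + 1 - j : ℕ) * h) * S (j + 1) * φ j) :
    h * β * ∑' n : ℕ, φ (n + 1) =
      (h * β * N * ∑' n : ℕ, A ((n + 1) * h)) * (1 - Sinf / N) := by
  set a : ℕ → ℝ := fun n => A ((n + 1) * h)
  have hremoved : HasSum (fun n => h * β * S (n + 1) * φ n) (S 0 - Sinf) := by
    convert hasSum_sub_succ_of_antitone (antitone_nat_of_succ_le hSmono) hSlim using 2 with n
    linarith [hSrec n]
  have hφ : ∀ n, φ (n + 1) =
      (N - S 0) * a n + ∑ k ∈ range (n + 1), h * β * S (k + 1) * φ k * a (n - k) := by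
    intro n
    rw [hφrec n, mul_sum]
    congr 1
    refine sum_congr rfl fun k hk => ?_
    rw [Nat.sub_add_comm (Nat.lt_succ_iff.mp (mem_range.mp hk))]
    push_cast
    ring
  have hsum : HasSum (fun n => φ (n + 1)) ((N - S 0) * ∑' n, a n + (S 0 - Sinf) * ∑' n, a n) :=
    ((hAsum.hasSum.mul_left (N - S 0)).add (hremoved.sum_range_mul hAsum.hasSum)).congr_fun hφ
  rw [hsum.tsum_eq]
  field_simp
  ring

/-- Discrete final size relation:
`hβ ∑ φ (n+1) = R₀(h) (1 - S∞(h)/N)` with `R₀(h) = hβN ∑ A(t_{n+1})`. -/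
theorem stmt_17 (h β N Sinf : ℝ) (hh : 0 < h) (hβ : 0 < β) (hN : 0 < N)
    (A : ℝ → ℝ) (hA : ∀ t, 0 ≤ t → 0 ≤ A t)
    (hAsum : Summable (fun n : ℕ => A ((n + 1) * h)))
    (S φ : ℕ → ℝ) (hSnonneg : ∀ n, 0 ≤ S n) (hφnonneg : ∀ n, 0 ≤ φ n)
    (hSmono : ∀ n, S (n + 1) ≤ S n)
    (hSlim : Tendsto S atTop (𝓝 Sinf))
    (hφsum : Summable φ)
    (hSrec : ∀ n, S (n + 1) = S n - h * β * S (n + 1) * φ n)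
    (hφrec : ∀ n, φ (n + 1) = (N - S 0) * A ((n + 1) * h)
      + h * β * ∑ j ∈ Finset.range (n + 1), A ((n + 1 - j : ℕ) * h) * S (j + 1) * φ j) :
    h * β * ∑' n : ℕ, φ (n + 1) =
      (h * β * N * ∑' n : ℕ, A ((n + 1) * h)) * (1 - Sinf / N) :=
  stmt_17_general h β N Sinf hN A hAsum S φ hSmono hSlim hSrec hφrec
end

section
/- The final size equation log(S_0/x) = R_0(1 − x/N), viewed as an equation for x ∈ (0, S_0], has a unique solution whenever 0 < S_0 ≤ N and R_0 > 0 — equivalently, the function g(x) = log(S_0/x) − R_0(1 − x/N) is strictly monotone on (0, N] beyond its critical point and changes sign exactly once on (0, S_0]. -/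
open Real Set

/-!
The gap `g x = log (S₀ / x) - R₀ (1 - x / N)` is convex on `(0, ∞)`, being `-log` plus an affine
function. It is negative at `S₀` and positive at `S₀ e^{-R₀}`, so the intermediate value theorem
gives a root in between; a convex function cannot vanish twice to the left of a point where it is
negative, which gives uniqueness.
-/

theorem ConvexOn.apply_neg_of_nonpos_of_neg {s : Set ℝ} {f : ℝ → ℝ} (hf : ConvexOn ℝ s f)
    {a b c : ℝ} (ha : a ∈ s) (hc : c ∈ s) (hab : a < b) (hbc : b < c)
    (hfa : f a ≤ 0) (hfc : f c < 0) : f b < 0 := by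
  by_contra! hfb
  have hslope := hf.slope_mono_adjacent ha hc hab hbc
  have hleft : 0 ≤ (f b - f a) / (b - a) := div_nonneg (by linarith) (by linarith)
  have hright : (f c - f b) / (c - b) < 0 := div_neg_of_neg_of_pos (by linarith) (by linarith)
  linarith

theorem ConvexOn.eq_of_apply_eq_zero {s : Set ℝ} {f : ℝ → ℝ} (hf : ConvexOn ℝ s f)
    {x y c : ℝ} (hx : x ∈ s) (hy : y ∈ s) (hc : c ∈ s) (hxc : x < c) (hyc : y < c)
    (hfc : f c < 0) (hfx : f x = 0) (hfy : f y = 0) : x = y := by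
  rcases lt_trichotomy x y with hxy | hxy | hyx
  · exact absurd (hf.apply_neg_of_nonpos_of_neg hx hc hxy hyc hfx.le hfc) hfy.not_lt
  · exact hxy
  · exact absurd (hf.apply_neg_of_nonpos_of_neg hy hc hyx hxc hfy.le hfc) hfx.not_lt

noncomputable def finalSizeGap (N S0 R0 x : ℝ) : ℝ := log (S0 / x) - R0 * (1 - x / N)

theorem convexOn_finalSizeGap {N S0 : ℝ} (R0 : ℝ) (hS0 : S0 ≠ 0) :
    ConvexOn ℝ (Ioi 0) (finalSizeGap N S0 R0) := by
  refine ((strictConcaveOn_log_Ioi.concaveOn.neg.add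
    ((LinearMap.mulLeft ℝ (R0 / N)).convexOn (convex_Ioi 0))).add_const (log S0 - R0)).congr ?_
  intro x (hx : 0 < x)
  simp only [finalSizeGap, Pi.add_apply, Pi.neg_apply, LinearMap.mulLeft_apply,
    log_div hS0 hx.ne']
  ring

theorem finalSizeGap_self {N S0 R0 : ℝ} (hS0 : S0 ≠ 0) :
    finalSizeGap N S0 R0 S0 = -(R0 * (1 - S0 / N)) := by
  simp [finalSizeGap, hS0]

theorem finalSizeGap_mul_exp_neg {N S0 : ℝ} (R0 : ℝ) (hS0 : S0 ≠ 0) :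
    finalSizeGap N S0 R0 (S0 * exp (-R0)) = R0 * (S0 * exp (-R0) / N) := by
  rw [finalSizeGap, div_mul_cancel_left₀ hS0, exp_neg, inv_inv, log_exp]
  ring

theorem stmt_19_general (N S0 R0 : ℝ) (hS0 : 0 < S0) (hS0N : S0 < N)
    (hR0 : 0 < R0) :
    ∃! x : ℝ, x ∈ Set.Ioo 0 S0 ∧ Real.log (S0 / x) = R0 * (1 - x / N) := by
  have hN : 0 < N := hS0.trans hS0N
  have hconvex := convexOn_finalSizeGap (N := N) R0 hS0.ne'
  have hcont := hconvex.continuousOn isOpen_Ioi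
  set x0 := S0 * exp (-R0)
  have hx0 : x0 ∈ Ioo 0 S0 :=
    ⟨by positivity, mul_lt_of_lt_one_right hS0 (Real.exp_lt_one_iff.mpr (neg_neg_of_pos hR0))⟩
  have hgS0 : finalSizeGap N S0 R0 S0 < 0 := by
    rw [finalSizeGap_self hS0.ne', neg_lt_zero]
    exact mul_pos hR0 (sub_pos.mpr ((div_lt_one hN).mpr hS0N))
  have hgx0 : 0 < finalSizeGap N S0 R0 x0 := by
    rw [finalSizeGap_mul_exp_neg R0 hS0.ne']
    exact mul_pos hR0 (div_pos hx0.1 hN)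
  have hzero : ∀ x, finalSizeGap N S0 R0 x = 0 ↔ log (S0 / x) = R0 * (1 - x / N) := fun x =>
    sub_eq_zero
  obtain ⟨x, hx, hgx⟩ := intermediate_value_Ioo' hx0.2.le
    (hcont.mono fun y hy => hx0.1.trans_le hy.1) ⟨hgS0, hgx0⟩
  refine ⟨x, ⟨⟨hx0.1.trans hx.1, hx.2⟩, (hzero x).mp hgx⟩, ?_⟩
  rintro y ⟨hy, hgy⟩
  exact hconvex.eq_of_apply_eq_zero hy.1 (hx0.1.trans hx.1) hS0 hy.2 hx.2 hgS0
    ((hzero y).mpr hgy) hgx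

/-- The final size equation `log(S₀/x) = R₀ (1 - x/N)` has a unique solution
in `(0, S₀)` when `0 < S₀ < N` and `R₀ > 0`. -/
theorem stmt_19 (N S0 R0 : ℝ) (hN : 0 < N) (hS0 : 0 < S0) (hS0N : S0 < N)
    (hR0 : 0 < R0) :
    ∃! x : ℝ, x ∈ Set.Ioo 0 S0 ∧ Real.log (S0 / x) = R0 * (1 - x / N) :=
  stmt_19_general N S0 R0 hS0 hS0N hR0
end
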